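/- arXiv:2406.04232 — 2 statements merged into one kernel-verified Lean document; each statement's English description precedes it below -/
import Mathlib

section
/- Let X be a nonnegative random variable and suppose there exist constants Θ₁ > 0 and Θ₂ > 0 such that E[X^p] ≤ p^p Θ₁^p + Θ₂^p for all integers p ≥ 1. Then for every ϑ > 0 one has P(X ≥ ϑ) ≤ 3 · exp(Θ₂/(2eΘ₁)) · exp(−ϑ/(2eΘ₁)). -/
open MeasureTheory Real

/-- Exponential Markov-type inequality: if a nonnegative random variable `X` satisfies the
moment bounds `E[X^p] ≤ p^p Θ₁^p + Θ₂^p` for all integers `p ≥ 1`, then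
`P(X ≥ ϑ) ≤ 3 exp(Θ₂/(2eΘ₁)) exp(−ϑ/(2eΘ₁))` for every `ϑ > 0`. -/
theorem stmt0 {Ω : Type*} [MeasurableSpace Ω] (μ : Measure Ω) [IsProbabilityMeasure μ]
    (X : Ω → ℝ) (hXmeas : Measurable X) (hXpos : ∀ ω, 0 ≤ X ω)
    (Θ₁ Θ₂ : ℝ) (hΘ₁ : 0 < Θ₁) (hΘ₂ : 0 < Θ₂)
    (hmom : ∀ p : ℕ, 1 ≤ p →
      ∫⁻ ω, ENNReal.ofReal ((X ω) ^ p) ∂μ ≤ ENNReal.ofReal ((p : ℝ) ^ p * Θ₁ ^ p + Θ₂ ^ p))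
    (ϑ : ℝ) (hϑ : 0 < ϑ) :
    μ {ω | ϑ ≤ X ω} ≤
      ENNReal.ofReal (3 * Real.exp (Θ₂ / (2 * Real.exp 1 * Θ₁)) *
        Real.exp (-ϑ / (2 * Real.exp 1 * Θ₁))) := by
  have he : (0:ℝ) < Real.exp 1 := Real.exp_pos 1
  set c : ℝ := 1 / (2 * Real.exp 1 * Θ₁) with hc_def
  have hden : (0:ℝ) < 2 * Real.exp 1 * Θ₁ := by positivity
  have hc : 0 < c := by positivity
  have hΘ₂c : Θ₂ / (2 * Real.exp 1 * Θ₁) = c * Θ₂ := by rw [hc_def]; ring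
  have hϑc : -ϑ / (2 * Real.exp 1 * Θ₁) = -(c * ϑ) := by rw [hc_def]; ring
  rw [hΘ₂c, hϑc]
  -- trivial cases
  by_cases htriv : c * ϑ < 1 ∨ ϑ ≤ Θ₂
  · have h1 : (1:ℝ) ≤ 3 * Real.exp (c * Θ₂) * Real.exp (-(c * ϑ)) := by
      rcases htriv with h | h
      · have h2 : Real.exp (-(1:ℝ)) ≤ Real.exp (-(c * ϑ)) := by
          apply Real.exp_le_exp.mpr; linarith
        have h3 : (1:ℝ) ≤ Real.exp (c * Θ₂) := by
          apply Real.one_le_exp; positivity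
        have h4 : Real.exp (-(1:ℝ)) = (Real.exp 1)⁻¹ := Real.exp_neg 1
        have h5 : Real.exp 1 ≤ 3 := by
          have := Real.exp_one_lt_d9; linarith
        have h6 : (1:ℝ) ≤ 3 * Real.exp (-(1:ℝ)) := by
          rw [h4, ← div_eq_mul_inv, le_div_iff₀ he]; linarith
        calc (1:ℝ) ≤ 3 * Real.exp (-(1:ℝ)) := h6
          _ ≤ 3 * Real.exp (-(c*ϑ)) := by nlinarith
          _ ≤ 3 * Real.exp (c*Θ₂) * Real.exp (-(c*ϑ)) := by nlinarith [Real.exp_pos (-(c*ϑ))]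
      · have h2 : (0:ℝ) ≤ c * Θ₂ + -(c * ϑ) := by nlinarith
        have h3 : (1:ℝ) ≤ Real.exp (c * Θ₂) * Real.exp (-(c * ϑ)) := by
          rw [← Real.exp_add]; exact Real.one_le_exp h2
        nlinarith [Real.exp_pos (c*Θ₂), Real.exp_pos (-(c*ϑ))]
    calc μ {ω | ϑ ≤ X ω} ≤ 1 := prob_le_one
      _ = ENNReal.ofReal 1 := by simp
      _ ≤ _ := ENNReal.ofReal_le_ofReal h1
  · push_neg at htriv
    obtain ⟨hcϑ, hΘ₂ϑ⟩ := htriv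
    set p : ℕ := ⌈c * ϑ⌉₊ with hp_def
    have hcϑ0 : (0:ℝ) < c * ϑ := by positivity
    have hple : (c * ϑ : ℝ) ≤ p := Nat.le_ceil _
    have hpub : (p:ℝ) < c * ϑ + 1 := Nat.ceil_lt_add_one hcϑ0.le
    have hp1 : 1 ≤ p := by
      rw [hp_def, Nat.one_le_ceil_iff]; exact hcϑ0
    have hppos : (0:ℝ) < p := by exact_mod_cast hp1
    -- Markov
    have hsub : {ω | ϑ ≤ X ω} ⊆
        {ω | ENNReal.ofReal (ϑ ^ p) ≤ ENNReal.ofReal (X ω ^ p)} := by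
      intro ω h
      exact ENNReal.ofReal_le_ofReal (pow_le_pow_left₀ hϑ.le h p)
    have hmeas : AEMeasurable (fun ω => ENNReal.ofReal (X ω ^ p)) μ :=
      ((hXmeas.pow_const p).ennreal_ofReal).aemeasurable
    have hmarkov := mul_meas_ge_le_lintegral₀ hmeas (ENNReal.ofReal (ϑ ^ p))
    have hϑp : (0:ℝ) < ϑ ^ p := by positivity
    have hchain : ENNReal.ofReal (ϑ ^ p) * μ {ω | ϑ ≤ X ω} ≤
        ENNReal.ofReal ((p : ℝ) ^ p * Θ₁ ^ p + Θ₂ ^ p) := by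
      calc ENNReal.ofReal (ϑ ^ p) * μ {ω | ϑ ≤ X ω}
          ≤ ENNReal.ofReal (ϑ ^ p) *
            μ {ω | ENNReal.ofReal (ϑ ^ p) ≤ ENNReal.ofReal (X ω ^ p)} := by
            exact mul_le_mul_right (measure_mono hsub) _
        _ ≤ ∫⁻ ω, ENNReal.ofReal (X ω ^ p) ∂μ := hmarkov
        _ ≤ _ := hmom p hp1
    have hμle : μ {ω | ϑ ≤ X ω} ≤
        ENNReal.ofReal (((p : ℝ) ^ p * Θ₁ ^ p + Θ₂ ^ p) / ϑ ^ p) := by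
      rw [ENNReal.ofReal_div_of_pos hϑp]
      rw [ENNReal.le_div_iff_mul_le (Or.inl (by simpa using hϑp))
        (Or.inl ENNReal.ofReal_ne_top)]
      rw [mul_comm]
      exact hchain
    refine hμle.trans (ENNReal.ofReal_le_ofReal ?_)
    -- real inequality
    have hE1 : Real.exp (c * Θ₂) ≥ 1 := Real.one_le_exp (by positivity)
    have hA : (p:ℝ) ^ p * Θ₁ ^ p / ϑ ^ p ≤ Real.exp (-(c * ϑ)) := by
      have h1 : ((p:ℝ) * Θ₁ / ϑ) ≤ Real.exp (-1) := by
        have h2 : (p:ℝ) ≤ 2 * (c * ϑ) := by linarith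
        have h3 : 2 * c * Θ₁ = (Real.exp 1)⁻¹ := by
          rw [hc_def]; field_simp
        rw [Real.exp_neg, ← h3, div_le_iff₀ hϑ]
        nlinarith
      have h4 : (0:ℝ) ≤ (p:ℝ) * Θ₁ / ϑ := by positivity
      calc (p:ℝ) ^ p * Θ₁ ^ p / ϑ ^ p = ((p:ℝ) * Θ₁ / ϑ) ^ p := by
            rw [div_pow, mul_pow]
        _ ≤ (Real.exp (-1)) ^ p := pow_le_pow_left₀ h4 h1 p
        _ = Real.exp (-(p:ℝ)) := by
            rw [← Real.exp_nat_mul]; ring_nf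
        _ ≤ Real.exp (-(c * ϑ)) := Real.exp_le_exp.mpr (by linarith)
    have hB : Θ₂ ^ p / ϑ ^ p ≤ Real.exp (c * Θ₂) * Real.exp (-(c * ϑ)) := by
      set t : ℝ := Θ₂ / ϑ with ht_def
      have ht0 : 0 < t := by positivity
      have ht1 : t ≤ 1 := by
        rw [ht_def, div_le_one hϑ]; linarith
      have h5 : Θ₂ ^ p / ϑ ^ p = t ^ (p:ℝ) := by
        rw [Real.rpow_natCast, ht_def, div_pow]
      rw [h5, ← Real.exp_add]
      have h6 : t ^ (p:ℝ) ≤ t ^ (c * ϑ) :=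
        Real.rpow_le_rpow_of_exponent_ge ht0 ht1 hple
      refine h6.trans ?_
      rw [Real.rpow_def_of_pos ht0]
      apply Real.exp_le_exp.mpr
      have h7 : Real.log t ≤ t - 1 := Real.log_le_sub_one_of_pos ht0
      have h8 : c * ϑ * (t - 1) = c * Θ₂ + -(c * ϑ) := by
        rw [ht_def]; field_simp; ring
      nlinarith
    have hsum : ((p : ℝ) ^ p * Θ₁ ^ p + Θ₂ ^ p) / ϑ ^ p
        = (p:ℝ) ^ p * Θ₁ ^ p / ϑ ^ p + Θ₂ ^ p / ϑ ^ p := by ring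
    rw [hsum]
    nlinarith [Real.exp_pos (-(c * ϑ)), Real.exp_pos (c * Θ₂)]
end

section
/- Let X₁, …, X_N (N ≥ 2) be nonnegative random variables and suppose there exist Θ₁, Θ₂ > 0 such that E[X_i^p] ≤ p^p Θ₁^p + Θ₂^p for all integers p ≥ 1 and all i. Then for every integer p ≥ 1, E[max_{1≤i≤N} X_i^p] ≤ (p^p + (log N)^p + Θ₂^p Θ₁^{−p})(24eΘ₁)^p. -/
open MeasureTheory Real

lemma maxcube (a b c : ℝ) (ha : 0 ≤ a) (hb : 0 ≤ b) (hc : 0 ≤ c) (p : ℕ) :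
    (a + b + c) ^ p ≤ 3 ^ p * (a ^ p + b ^ p + c ^ p) := by
  set M := max (max a b) c with hM
  have hMa : a ≤ M := le_trans (le_max_left a b) (le_max_left _ _)
  have hMb : b ≤ M := le_trans (le_max_right a b) (le_max_left _ _)
  have hMc : c ≤ M := le_max_right _ _
  have hM0 : 0 ≤ M := le_trans ha hMa
  have h2 : M ^ p ≤ a ^ p + b ^ p + c ^ p := by
    rcases max_cases (max a b) c with ⟨h, _⟩ | ⟨h, _⟩
    · rcases max_cases a b with ⟨h', _⟩ | ⟨h', _⟩
      · rw [hM, h, h']; nlinarith [pow_nonneg hb p, pow_nonneg hc p]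
      · rw [hM, h, h']; nlinarith [pow_nonneg ha p, pow_nonneg hc p]
    · rw [hM, h]; nlinarith [pow_nonneg ha p, pow_nonneg hb p]
  calc (a+b+c)^p ≤ (3*M)^p := pow_le_pow_left₀ (by linarith) (by linarith) p
  _ = 3^p * M^p := mul_pow 3 M p
  _ ≤ 3^p * (a^p+b^p+c^p) := mul_le_mul_of_nonneg_left h2 (by positivity)

set_option maxHeartbeats 1000000 in
lemma key_real (N p m : ℕ) (hN : 2 ≤ N) (hp : 1 ≤ p) (Θ₁ Θ₂ : ℝ) (hΘ₁ : 0 < Θ₁) (hΘ₂ : 0 < Θ₂)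
    (hm1 : Real.log (2 * N) ≤ m) (hm2 : (m : ℝ) ≤ Real.log (2 * N) + 1) :
    (Real.exp 1 * (((p + m : ℕ) : ℝ) * Θ₁ + Θ₂)) ^ p +
      N * (((p + m : ℕ) : ℝ) ^ (p + m) * Θ₁ ^ (p + m) + Θ₂ ^ (p + m)) /
        (Real.exp 1 * (((p + m : ℕ) : ℝ) * Θ₁ + Θ₂)) ^ m ≤
    (((p : ℝ) ^ p + (Real.log N) ^ p + Θ₂ ^ p * Θ₁⁻¹ ^ p) * (24 * Real.exp 1 * Θ₁) ^ p) := by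
  have hN0 : (0:ℝ) < N := by positivity
  have hN1 : (2:ℝ) ≤ N := by exact_mod_cast hN
  set e := Real.exp 1 with he
  have he0 : (0:ℝ) < e := Real.exp_pos 1
  have he1 : (1:ℝ) ≤ e := Real.one_le_exp (by norm_num)
  set A : ℝ := ((p + m : ℕ) : ℝ) * Θ₁ + Θ₂ with hAdef
  have hq : (0:ℝ) < ((p + m : ℕ) : ℝ) := by positivity
  have hA : 0 < A := by positivity
  set L := Real.log N with hL
  have hL2 : Real.log 2 ≤ L := Real.log_le_log (by norm_num) hN1
  have hlog2 : (0.6931471803 : ℝ) < Real.log 2 := Real.log_two_gt_d9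
  have hlog2' : Real.log 2 < 0.6931471808 := Real.log_two_lt_d9
  have hL0 : 0 < L := by linarith
  have hlog2N : Real.log (2 * N) = Real.log 2 + L := by
    rw [Real.log_mul (by norm_num) (by positivity)]
  -- exp m ≥ 2N
  have hexpm : 2 * (N:ℝ) ≤ e ^ m := by
    have h1 : (2 * (N:ℝ)) = Real.exp (Real.log (2 * N)) := (Real.exp_log (by positivity)).symm
    have h2 : Real.exp (Real.log (2 * N)) ≤ Real.exp m := Real.exp_le_exp.mpr hm1
    have h3 : e ^ m = Real.exp m := by rw [he, ← Real.exp_nat_mul, mul_one]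
    rw [h1, h3]; exact h2
  -- second term ≤ A ^ p
  have hterm2 : N * (((p + m : ℕ) : ℝ) ^ (p + m) * Θ₁ ^ (p + m) + Θ₂ ^ (p + m)) / (e * A) ^ m
      ≤ A ^ p := by
    rw [div_le_iff₀ (by positivity)]
    have hB : ((p + m : ℕ) : ℝ) ^ (p + m) * Θ₁ ^ (p + m) + Θ₂ ^ (p + m) ≤ 2 * A ^ (p + m) := by
      have h1 : ((p + m : ℕ) : ℝ) ^ (p + m) * Θ₁ ^ (p + m) = (((p + m : ℕ) : ℝ) * Θ₁) ^ (p + m) :=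
        (mul_pow _ _ _).symm
      have h2 : (((p + m : ℕ) : ℝ) * Θ₁) ^ (p + m) ≤ A ^ (p + m) :=
        pow_le_pow_left₀ (by positivity) (by rw [hAdef]; linarith) _
      have h3 : Θ₂ ^ (p + m) ≤ A ^ (p + m) :=
        pow_le_pow_left₀ (le_of_lt hΘ₂) (by rw [hAdef]; nlinarith) _
      rw [h1]; linarith
    calc (N:ℝ) * (((p + m : ℕ) : ℝ) ^ (p + m) * Θ₁ ^ (p + m) + Θ₂ ^ (p + m))
        ≤ N * (2 * A ^ (p + m)) := by
          exact mul_le_mul_of_nonneg_left hB (le_of_lt hN0)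
      _ = (2 * N) * (A ^ p * A ^ m) := by rw [pow_add]; ring
      _ ≤ e ^ m * (A ^ p * A ^ m) := mul_le_mul_of_nonneg_right hexpm (by positivity)
      _ = A ^ p * (e * A) ^ m := by rw [mul_pow]; ring
  -- m ≤ 4 L
  have hm4 : (m : ℝ) ≤ 4 * L := by
    rw [hlog2N] at hm2; nlinarith
  -- A ≤ pΘ₁ + 4LΘ₁ + Θ₂
  have hAle : A ≤ (p:ℝ) * Θ₁ + 4 * L * Θ₁ + Θ₂ := by
    rw [hAdef]; push_cast; nlinarith
  have hApow : A ^ p ≤ 3 ^ p * (((p:ℝ)*Θ₁) ^ p + (4*L*Θ₁) ^ p + Θ₂ ^ p) := by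
    calc A ^ p ≤ ((p:ℝ)*Θ₁ + 4*L*Θ₁ + Θ₂) ^ p := pow_le_pow_left₀ (le_of_lt hA) hAle p
    _ ≤ _ := maxcube _ _ _ (by positivity) (by positivity) (by positivity) p
  have h2p : (2:ℝ) ≤ 2 ^ p := by
    calc (2:ℝ) = 2^1 := (pow_one 2).symm
    _ ≤ 2^p := pow_le_pow_right₀ one_le_two hp
  have h8p : (2:ℝ) ≤ 8 ^ p := by
    calc (2:ℝ) ≤ 8^1 := by norm_num
    _ ≤ 8^p := pow_le_pow_right₀ (by norm_num) hp
  -- RHS rewrite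
  have hRHS : (((p : ℝ) ^ p + L ^ p + Θ₂ ^ p * Θ₁⁻¹ ^ p) * (24 * e * Θ₁) ^ p)
      = 24 ^ p * e ^ p * ((p:ℝ)^p * Θ₁^p + L^p * Θ₁^p + Θ₂^p) := by
    have : Θ₁⁻¹ ^ p * Θ₁ ^ p = 1 := by
      rw [← mul_pow, inv_mul_cancel₀ (ne_of_gt hΘ₁), one_pow]
    rw [mul_pow, mul_pow]
    linear_combination (24:ℝ)^p * e^p * Θ₂^p * this
  -- final assembly
  have h12 : (12:ℝ)^p = 4^p*3^p := by rw [← mul_pow]; norm_num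
  have h24a : (24:ℝ)^p = 8^p*3^p := by rw [← mul_pow]; norm_num
  have h24b : (24:ℝ)^p = 2^p*12^p := by rw [← mul_pow]; norm_num
  have hA_p : (0:ℝ) ≤ A^p := pow_nonneg (le_of_lt hA) p
  have hep : (1:ℝ) ≤ e^p := one_le_pow₀ he1
  have hep' : A ^ p ≤ e ^ p * A ^ p := by nlinarith
  calc (e * A) ^ p + N * (((p + m : ℕ) : ℝ) ^ (p + m) * Θ₁ ^ (p + m) + Θ₂ ^ (p + m)) / (e * A) ^ m
      ≤ e ^ p * A ^ p + A ^ p := by rw [mul_pow]; linarith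
    _ ≤ 2 * e ^ p * A ^ p := by linarith
    _ ≤ 2 * e ^ p * (3 ^ p * (((p:ℝ)*Θ₁) ^ p + (4*L*Θ₁) ^ p + Θ₂ ^ p)) := by
        apply mul_le_mul_of_nonneg_left hApow (by positivity)
    _ = e ^ p * (2 * 3 ^ p * ((p:ℝ)^p * Θ₁^p) + 2 * 12 ^ p * (L^p * Θ₁^p) + 2 * 3 ^ p * Θ₂^p) := by
        rw [mul_pow, mul_pow, mul_pow]
        linear_combination (-2*e^p*L^p*Θ₁^p) * h12
    _ ≤ e ^ p * (24 ^ p * ((p:ℝ)^p * Θ₁^p) + 24 ^ p * (L^p * Θ₁^p) + 24 ^ p * Θ₂^p) := by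
        have e1 : (2:ℝ) * 3 ^ p ≤ 24 ^ p := by
          rw [h24a]; nlinarith [pow_pos (show (0:ℝ)<3 by norm_num) p]
        have e2 : (2:ℝ) * 12 ^ p ≤ 24 ^ p := by
          rw [h24b]; nlinarith [pow_pos (show (0:ℝ)<12 by norm_num) p]
        have t1 : (0:ℝ) ≤ (p:ℝ)^p * Θ₁^p := by positivity
        have t2 : (0:ℝ) ≤ L^p * Θ₁^p := by positivity
        have t3 : (0:ℝ) ≤ Θ₂^p := by positivity
        have u1 := mul_le_mul_of_nonneg_right e1 t1
        have u2 := mul_le_mul_of_nonneg_right e2 t2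
        have u3 := mul_le_mul_of_nonneg_right e1 t3
        apply mul_le_mul_of_nonneg_left _ (by positivity)
        linarith
    _ = (((p : ℝ) ^ p + L ^ p + Θ₂ ^ p * Θ₁⁻¹ ^ p) * (24 * e * Θ₁) ^ p) := by
        rw [hRHS]; ring


/-- Maximal moment bound: if `N ≥ 2` nonnegative random variables `X₁, …, X_N` satisfy the
uniform moment bounds `E[X_i^p] ≤ p^p Θ₁^p + Θ₂^p` for all integers `p ≥ 1`, then for every
integer `p ≥ 1` one has
`E[max_i X_i^p] ≤ (p^p + (log N)^p + Θ₂^p Θ₁^{−p})(24eΘ₁)^p`. -/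
theorem stmt2 {Ω : Type*} [MeasurableSpace Ω] (μ : Measure Ω) [IsProbabilityMeasure μ]
    (N : ℕ) (hN : 2 ≤ N) (X : Fin N → Ω → ℝ)
    (hXmeas : ∀ i, Measurable (X i)) (hXpos : ∀ i ω, 0 ≤ X i ω)
    (Θ₁ Θ₂ : ℝ) (hΘ₁ : 0 < Θ₁) (hΘ₂ : 0 < Θ₂)
    (hmom : ∀ (i : Fin N) (p : ℕ), 1 ≤ p →
      ∫⁻ ω, ENNReal.ofReal ((X i ω) ^ p) ∂μ ≤
        ENNReal.ofReal ((p : ℝ) ^ p * Θ₁ ^ p + Θ₂ ^ p)) :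
    ∀ p : ℕ, 1 ≤ p →
      ∫⁻ ω, ENNReal.ofReal ((⨆ i, X i ω) ^ p) ∂μ ≤
        ENNReal.ofReal
          (((p : ℝ) ^ p + (Real.log N) ^ p + Θ₂ ^ p * Θ₁⁻¹ ^ p) *
            (24 * Real.exp 1 * Θ₁) ^ p) := by

  intro p hp
  haveI : NeZero N := ⟨by omega⟩
  set m : ℕ := ⌈Real.log (2 * (N:ℝ))⌉₊ with hmdef
  have hlogpos : (0:ℝ) ≤ Real.log (2 * (N:ℝ)) := by
    apply Real.log_nonneg
    have : (2:ℝ) ≤ N := by exact_mod_cast hN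
    nlinarith
  have hm1 : Real.log (2 * (N:ℝ)) ≤ m := Nat.le_ceil _
  have hm2 : (m:ℝ) ≤ Real.log (2 * (N:ℝ)) + 1 := (Nat.ceil_lt_add_one hlogpos).le
  set q : ℕ := p + m with hqdef
  have hq1 : 1 ≤ q := le_trans hp (Nat.le_add_right p m)
  set A : ℝ := ((q:ℕ):ℝ) * Θ₁ + Θ₂ with hAdef
  have hA : 0 < A := by positivity
  set t : ℝ := Real.exp 1 * A with htdef
  have ht : 0 < t := by positivity
  set B : ℝ := ((q:ℕ):ℝ) ^ q * Θ₁ ^ q + Θ₂ ^ q with hBdef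
  have hB0 : 0 ≤ B := by positivity
  -- pointwise bound
  have hpt : ∀ ω, (⨆ i, X i ω) ^ p ≤ t ^ p + (∑ i, X i ω ^ q) / t ^ m := by
    intro ω
    obtain ⟨i, hi⟩ := exists_eq_ciSup_of_finite (f := fun i => X i ω)
    set s : ℝ := ⨆ i, X i ω with hsdef
    have hs0 : 0 ≤ s := hi ▸ hXpos i ω
    have hsum : s ^ q ≤ ∑ j, X j ω ^ q := by
      rw [← hi]
      exact Finset.single_le_sum (f := fun j => X j ω ^ q)
        (fun j _ => pow_nonneg (hXpos j ω) q) (Finset.mem_univ i)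
    have hsumnn : 0 ≤ ∑ j, X j ω ^ q :=
      Finset.sum_nonneg fun j _ => pow_nonneg (hXpos j ω) q
    by_cases hst : s ≤ t
    · have h1 : s ^ p ≤ t ^ p := pow_le_pow_left₀ hs0 hst p
      have h2 : 0 ≤ (∑ i, X i ω ^ q) / t ^ m := by positivity
      linarith
    · push_neg at hst
      have h1 : s ^ p ≤ s ^ q / t ^ m := by
        rw [le_div_iff₀ (by positivity)]
        have : t ^ m ≤ s ^ m := pow_le_pow_left₀ (le_of_lt ht) (le_of_lt hst) m
        calc s ^ p * t ^ m ≤ s ^ p * s ^ m :=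
              mul_le_mul_of_nonneg_left this (pow_nonneg hs0 p)
          _ = s ^ q := by rw [hqdef, pow_add]
      have h2 : s ^ q / t ^ m ≤ (∑ j, X j ω ^ q) / t ^ m := by
        gcongr
      have h3 : 0 ≤ t ^ p := by positivity
      linarith
  -- lintegral estimate
  have hmeas : ∀ i, Measurable fun ω => ENNReal.ofReal (X i ω ^ q) :=
    fun i => ((hXmeas i).pow_const q).ennreal_ofReal
  have step1 : ∫⁻ ω, ENNReal.ofReal ((⨆ i, X i ω) ^ p) ∂μ ≤
      ENNReal.ofReal (t ^ p) + (N : ENNReal) * ENNReal.ofReal B * (ENNReal.ofReal (t ^ m))⁻¹ := by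
    calc ∫⁻ ω, ENNReal.ofReal ((⨆ i, X i ω) ^ p) ∂μ
        ≤ ∫⁻ ω, ENNReal.ofReal (t ^ p + (∑ i, X i ω ^ q) / t ^ m) ∂μ :=
          lintegral_mono fun ω => ENNReal.ofReal_le_ofReal (hpt ω)
      _ = ∫⁻ ω, (ENNReal.ofReal (t ^ p)
            + (∑ i, ENNReal.ofReal (X i ω ^ q)) * (ENNReal.ofReal (t ^ m))⁻¹) ∂μ := by
          apply lintegral_congr
          intro ω
          have hsumnn : ∀ j ∈ Finset.univ, (0:ℝ) ≤ X j ω ^ q :=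
            fun j _ => pow_nonneg (hXpos j ω) q
          rw [ENNReal.ofReal_add (by positivity)
              (div_nonneg (Finset.sum_nonneg hsumnn) (by positivity)),
            ENNReal.ofReal_div_of_pos (by positivity),
            ENNReal.ofReal_sum_of_nonneg hsumnn, div_eq_mul_inv]
      _ = ENNReal.ofReal (t ^ p)
            + (∑ i, ∫⁻ ω, ENNReal.ofReal (X i ω ^ q) ∂μ) * (ENNReal.ofReal (t ^ m))⁻¹ := by
          rw [lintegral_add_left measurable_const, lintegral_const, measure_univ, mul_one,
            lintegral_mul_const' _ _ (by simp [ENNReal.inv_ne_top]; positivity),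
            lintegral_finset_sum _ (fun i _ => hmeas i)]
      _ ≤ ENNReal.ofReal (t ^ p) + ((N : ENNReal) * ENNReal.ofReal B) * (ENNReal.ofReal (t ^ m))⁻¹ := by
          apply add_le_add_right
          apply mul_le_mul_left
          calc ∑ i, ∫⁻ ω, ENNReal.ofReal (X i ω ^ q) ∂μ
              ≤ ∑ _i : Fin N, ENNReal.ofReal B :=
                Finset.sum_le_sum fun i _ => hmom i q hq1
            _ = (N : ENNReal) * ENNReal.ofReal B := by
                rw [Finset.sum_const, Finset.card_univ, Fintype.card_fin, nsmul_eq_mul]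
  have step2 : ENNReal.ofReal (t ^ p) + (N : ENNReal) * ENNReal.ofReal B * (ENNReal.ofReal (t ^ m))⁻¹
      = ENNReal.ofReal (t ^ p + N * B / t ^ m) := by
    rw [← ENNReal.ofReal_natCast N, ← ENNReal.ofReal_mul (by positivity), ← div_eq_mul_inv,
      ← ENNReal.ofReal_div_of_pos (by positivity),
      ← ENNReal.ofReal_add (by positivity) (by positivity)]
  rw [step2] at step1
  refine le_trans step1 (ENNReal.ofReal_le_ofReal ?_)
  exact key_real N p m hN hp Θ₁ Θ₂ hΘ₁ hΘ₂ hm1 hm2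
end
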